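/- arXiv:1109.4865 — 2 statements merged into one kernel-verified Lean document; each statement's English description precedes it below -/
import Mathlib

section
/- Let k ∈ (-1,1) and N > 1. For every continuous biconvex function f : ℝ² → ℝ (i.e. x ↦ f(x,y) and y ↦ f(x,y) are convex for each fixed value of the other variable), one has f(1,1) ≤ (1/(1-k)) ∫₁^N (f(kt,t) + f(t,kt)) t^{-2/(1-k)} (dt/t) + f(N,N) N^{-2/(1-k)}. -/
/-!
With `α = 2 / (1 - k)` put
`B(t) = f(t,t) t^{-α} + (1/(1-k)) ∫₁ᵗ (f(ks,s) + f(s,ks)) s^{-α} ds/s`,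
so that the claim reads `B 1 ≤ B N`. The diagonal `t ↦ f(t,t)` need not be differentiable, but
convexity in each variable bounds its right difference quotients at `x` from below by quantities
converging to `(2 f(x,x) - f(kx,x) - f(x,kx)) / ((1-k) x)`. With this bound the lower right Dini
derivative of `B` is `≥ 0`, the exponent `α` being exactly the one for which the terms cancel,
and a continuous function with nonnegative lower right Dini derivative is nondecreasing.
-/

open Topology Filter Set

/-- The lower right Dini derivative of `B` at `x` is at least `L`. -/
def RightDiniLowerBound (B : ℝ → ℝ) (L x : ℝ) : Prop :=
  ∃ m : ℝ → ℝ, Tendsto m (𝓝[>] x) (𝓝 L) ∧ ∀ᶠ z in 𝓝[>] x, m z ≤ slope B x z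

theorem HasDerivAt.rightDiniLowerBound {B : ℝ → ℝ} {B' x : ℝ} (h : HasDerivAt B B' x) :
    RightDiniLowerBound B B' x :=
  ⟨slope B x, h.tendsto_slope.mono_left (nhdsGT_le_nhdsNE x),
    Eventually.of_forall fun _ => le_rfl⟩

namespace RightDiniLowerBound

variable {B g p : ℝ → ℝ} {L x : ℝ}

theorem add {B₂ : ℝ → ℝ} {L₂ : ℝ} (h : RightDiniLowerBound B L x)
    (h₂ : RightDiniLowerBound B₂ L₂ x) :
    RightDiniLowerBound (fun t => B t + B₂ t) (L + L₂) x := by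
  obtain ⟨m, hm, hmB⟩ := h
  obtain ⟨m₂, hm₂, hmB₂⟩ := h₂
  refine ⟨fun z => m z + m₂ z, hm.add hm₂, ?_⟩
  filter_upwards [hmB, hmB₂] with z hz hz₂
  calc m z + m₂ z ≤ slope B x z + slope B₂ x z := add_le_add hz hz₂
    _ = slope (fun t => B t + B₂ t) x z := by simp only [slope_def_field]; ring

theorem mul {p' : ℝ} (hg : RightDiniLowerBound g L x) (hp : HasDerivAt p p' x)
    (hp₀ : ∀ᶠ z in 𝓝[>] x, 0 ≤ p z) :
    RightDiniLowerBound (fun t => g t * p t) (L * p x + g x * p') x := by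
  obtain ⟨m, hm, hmg⟩ := hg
  refine ⟨fun z => m z * p z + g x * slope p x z,
    (hm.mul (hp.continuousAt.tendsto.mono_left nhdsWithin_le_nhds)).add
      ((hp.tendsto_slope.mono_left (nhdsGT_le_nhdsNE x)).const_mul _), ?_⟩
  filter_upwards [hmg, hp₀, self_mem_nhdsWithin] with z hz hpz hxz
  have hzx : z - x ≠ 0 := sub_ne_zero.2 (ne_of_gt hxz)
  calc m z * p z + g x * slope p x z ≤ slope g x z * p z + g x * slope p x z := by gcongr
    _ = slope (fun t => g t * p t) x z := by simp only [slope_def_field]; field_simp; ring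

end RightDiniLowerBound

theorem le_of_rightDiniLowerBound_zero {B : ℝ → ℝ} {a b : ℝ} (hab : a ≤ b)
    (hB : ContinuousOn B (Icc a b)) (hB' : ∀ x ∈ Ico a b, RightDiniLowerBound B 0 x) :
    B a ≤ B b := by
  suffices -B b ≤ -B a from neg_le_neg_iff.mp this
  refine image_le_of_liminf_slope_right_le_deriv_boundary (f := fun t => -B t) (B' := fun _ => 0)
    hB.neg le_rfl continuousOn_const (fun x _ => hasDerivWithinAt_const x _ _) ?_
    (right_mem_Icc.2 hab)
  intro x hx r hr
  obtain ⟨m, hm, hmB⟩ := hB' x hx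
  refine Eventually.frequently ?_
  filter_upwards [hmB, hm.eventually (lt_mem_nhds (neg_lt_zero.2 hr))] with z hz hmz
  rw [slope_neg]
  linarith

theorem le_slope_diag_of_convexOn {f : ℝ → ℝ → ℝ} {a x z : ℝ} (hax : a < x) (hxz : x < z)
    (h₁ : ConvexOn ℝ univ (f · z)) (h₂ : ConvexOn ℝ univ (f x ·)) :
    (f x z - f a z + (f x x - f x a)) / (x - a) ≤ slope (fun t => f t t) x z := by
  have s₁ := h₁.slope_mono_adjacent (mem_univ a) (mem_univ z) hax hxz
  have s₂ := h₂.slope_mono_adjacent (mem_univ a) (mem_univ z) hax hxz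
  calc _ = (f x z - f a z) / (x - a) + (f x x - f x a) / (x - a) := add_div _ _ _
    _ ≤ (f z z - f x z) / (z - x) + (f x z - f x x) / (z - x) := add_le_add s₁ s₂
    _ = slope (fun t => f t t) x z := by rw [slope_def_field, ← add_div]; ring_nf

theorem rightDiniLowerBound_diag_of_convexOn {f : ℝ → ℝ → ℝ} {a x : ℝ} (hax : a < x)
    (h₁ : ∀ z, ConvexOn ℝ univ (f · z)) (h₂ : ConvexOn ℝ univ (f x ·))
    (hfx : ContinuousAt (f x) x) (hfa : ContinuousAt (f a) x) :
    RightDiniLowerBound (fun t => f t t) ((2 * f x x - f a x - f x a) / (x - a)) x := by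
  refine ⟨fun z => (f x z - f a z + (f x x - f x a)) / (x - a), ?_, ?_⟩
  · have hm : ContinuousAt (fun z => (f x z - f a z + (f x x - f x a)) / (x - a)) x :=
      ((hfx.sub hfa).add continuousAt_const).div_const _
    convert hm.tendsto.mono_left nhdsWithin_le_nhds using 2
    ring
  · filter_upwards [self_mem_nhdsWithin] with z hxz
    exact le_slope_diag_of_convexOn hax hxz (h₁ z) h₂

theorem hasDerivAt_integral_of_continuousOn_Ioi {φ : ℝ → ℝ} {c a x : ℝ}
    (hφ : ContinuousOn φ (Ioi c)) (ha : c < a) (hx : c < x) :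
    HasDerivAt (fun t => ∫ s in a..t, φ s) (φ x) x :=
  intervalIntegral.integral_hasDerivAt_right
    ((hφ.mono (ordConnected_Ioi.uIcc_subset ha hx)).intervalIntegrable)
    (hφ.stronglyMeasurableAtFilter isOpen_Ioi x hx) (hφ.continuousAt (Ioi_mem_nhds hx))

section Potential

variable (k : ℝ) (f : ℝ → ℝ → ℝ)

noncomputable def offDiagIntegrand (t : ℝ) : ℝ :=
  (f (k * t) t + f t (k * t)) * t ^ (-(2 / (1 - k))) / t

noncomputable def biconvexPotential (t : ℝ) : ℝ :=
  f t t * t ^ (-(2 / (1 - k))) + 1 / (1 - k) * ∫ s in (1 : ℝ)..t, offDiagIntegrand k f s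

variable {k f}

theorem continuousOn_offDiagIntegrand (hf : Continuous fun p : ℝ × ℝ => f p.1 p.2) :
    ContinuousOn (offDiagIntegrand k f) (Ioi 0) := by
  have hdiag : Continuous fun t => f (k * t) t + f t (k * t) := by fun_prop
  intro t ht
  exact ((hdiag.continuousAt.mul (Real.continuousAt_rpow_const _ _ (Or.inl (ne_of_gt ht)))).div
    continuousAt_id (ne_of_gt ht)).continuousWithinAt

theorem rightDiniLowerBound_biconvexPotential (hk : k < 1)
    (hf : Continuous fun p : ℝ × ℝ => f p.1 p.2)
    (h₁ : ∀ y, ConvexOn ℝ univ fun x => f x y) (h₂ : ∀ x, ConvexOn ℝ univ fun y => f x y)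
    {x : ℝ} (hx : 0 < x) : RightDiniLowerBound (biconvexPotential k f) 0 x := by
  have hkx : k * x < x := by nlinarith
  have hdiag := rightDiniLowerBound_diag_of_convexOn hkx h₁ (h₂ x)
    (hf.uncurry_left x).continuousAt (hf.uncurry_left (k * x)).continuousAt
  have hpow : HasDerivAt (fun t => t ^ (-(2 / (1 - k))))
      (-(2 / (1 - k)) * x ^ (-(2 / (1 - k)) - 1)) x :=
    Real.hasDerivAt_rpow_const (Or.inl hx.ne')
  have hpow₀ : ∀ᶠ z in 𝓝[>] x, 0 ≤ z ^ (-(2 / (1 - k))) := by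
    filter_upwards [self_mem_nhdsWithin] with z hz
    exact Real.rpow_nonneg (hx.trans hz).le _
  have hint := (hasDerivAt_integral_of_continuousOn_Ioi
    (continuousOn_offDiagIntegrand (k := k) hf) one_pos hx).const_mul (1 / (1 - k))
  unfold biconvexPotential
  convert (hdiag.mul hpow hpow₀).add hint.rightDiniLowerBound using 1
  have h1k : 1 - k ≠ 0 := by linarith
  rw [Real.rpow_sub_one hx.ne', offDiagIntegrand]
  field_simp
  ring

theorem continuousOn_biconvexPotential (hf : Continuous fun p : ℝ × ℝ => f p.1 p.2) :
    ContinuousOn (biconvexPotential k f) (Ioi 0) := by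
  intro x hx
  have hint := hasDerivAt_integral_of_continuousOn_Ioi
    (continuousOn_offDiagIntegrand (k := k) hf) one_pos hx
  have hdiag : Continuous fun t => f t t := by fun_prop
  unfold biconvexPotential
  exact ((hdiag.continuousAt.mul (Real.continuousAt_rpow_const _ _ (Or.inl (ne_of_gt hx)))).add
    (continuousAt_const.mul hint.continuousAt)).continuousWithinAt

theorem biconvexPotential_one : biconvexPotential k f 1 = f 1 1 := by
  simp [biconvexPotential]

end Potential

/-- Lemma 9 (truncated form): for `k ∈ (-1,1)`, `N > 1` and any continuous biconvex
function `f : ℝ² → ℝ`,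
`f(1,1) ≤ (1/(1-k)) ∫₁^N (f(kt,t)+f(t,kt)) t^{-2/(1-k)} dt/t + f(N,N) N^{-2/(1-k)}`. -/
theorem stmt0 (k N : ℝ) (hk : k ∈ Set.Ioo (-1 : ℝ) 1) (hN : 1 < N)
    (f : ℝ → ℝ → ℝ)
    (hcont : Continuous fun p : ℝ × ℝ => f p.1 p.2)
    (hconv1 : ∀ y, ConvexOn ℝ Set.univ fun x => f x y)
    (hconv2 : ∀ x, ConvexOn ℝ Set.univ fun y => f x y) :
    f 1 1 ≤ (1 / (1 - k)) *
        (∫ t in (1:ℝ)..N, (f (k * t) t + f t (k * t)) * t ^ (-(2 / (1 - k))) / t)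
      + f N N * N ^ (-(2 / (1 - k))) := by
  have hpos : Icc 1 N ⊆ Ioi 0 := fun t ht => zero_lt_one.trans_le ht.1
  have hmono := le_of_rightDiniLowerBound_zero hN.le
    ((continuousOn_biconvexPotential hcont).mono hpos)
    fun x hx => rightDiniLowerBound_biconvexPotential hk.2 hcont hconv1 hconv2
      (hpos (Ico_subset_Icc_self hx))
  rw [biconvexPotential_one, biconvexPotential] at hmono
  simpa only [offDiagIntegrand, add_comm] using hmono
end

section
/- Let μ_N be the measure on ℝ² (identified with diagonal 2×2 matrices) defined by ∫ f dμ_N = (1/(1-k)) ∫₁^N [f(kt,t) + f(t,kt)] t^{-p} (dt/t) + f(N,N) N^{-p}, where 1 < p ≤ 2, k = 1 - 2/p, N > 1. Then μ_N is a probability measure with barycenter (1,1). -/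
/-! The density `t^{-p-1}` integrates to `(1 - N^{-p})/p` on `[1, N]` and `t · t^{-p-1}` to
`(1 - N^{1-p})/(p-1)`. With `1 - k = 2/p` and `(1 + k)/(p - 1) = 2/p`, the prefactor `1/(1-k)`
turns both into `1 - (atom at N)`, and the atom `N^{-p}` (resp. `N · N^{-p}`) makes up the rest. -/

open intervalIntegral

lemma integral_one_rpow_neg_sub_one {s N : ℝ} (hs : s ≠ 0) (hN : 0 < N) :
    ∫ t in (1 : ℝ)..N, t ^ (-s - 1) = (1 - N ^ (-s)) / s := by
  have hmem : (0 : ℝ) ∉ Set.uIcc 1 N := fun h =>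
    (Set.mem_uIcc.mp h).elim (fun h => by linarith [h.1]) (fun h => by linarith [h.1])
  rw [integral_rpow (Or.inr ⟨fun h => hs (by linarith), hmem⟩)]
  have hs' : -s - 1 + 1 = -s := by ring
  rw [hs', Real.one_rpow]
  field_simp
  ring

lemma integral_one_mass {p N : ℝ} (hp : 0 < p) (hN : 0 < N) :
    ∫ t in (1 : ℝ)..N, ((1 : ℝ) + 1) * t ^ (-p) / t = 2 / p * (1 - N ^ (-p)) := by
  have hint : Set.EqOn (fun t : ℝ => ((1 : ℝ) + 1) * t ^ (-p) / t) (fun t => 2 * t ^ (-p - 1))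
      (Set.uIcc 1 N) := fun t ht => by
    have ht0 : 0 < t := lt_of_lt_of_le (lt_min one_pos hN) ht.1
    dsimp only
    rw [Real.rpow_sub ht0, Real.rpow_one]
    ring
  rw [integral_congr hint, integral_const_mul, integral_one_rpow_neg_sub_one hp.ne' hN]
  ring

lemma integral_one_first_moment {p N : ℝ} (k : ℝ) (hp : 1 < p) (hN : 0 < N) :
    ∫ t in (1 : ℝ)..N, (k * t + t) * t ^ (-p) / t = (k + 1) / (p - 1) * (1 - N * N ^ (-p)) := by
  have hint : Set.EqOn (fun t : ℝ => (k * t + t) * t ^ (-p) / t)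
      (fun t => (k + 1) * t ^ (-(p - 1) - 1)) (Set.uIcc 1 N) := fun t ht => by
    have ht0 : 0 < t := lt_of_lt_of_le (lt_min one_pos hN) ht.1
    rw [show -(p - 1) - 1 = -p by ring]
    field_simp
  rw [integral_congr hint, integral_const_mul,
    integral_one_rpow_neg_sub_one (sub_ne_zero.mpr hp.ne') hN,
    show -(p - 1) = 1 + -p by ring, Real.rpow_add hN, Real.rpow_one]
  ring

theorem stmt18_general (p k N : ℝ) (hp1 : 1 < p) (hk : k = 1 - 2 / p)
    (hN : 1 < N)
    (I : (ℝ → ℝ → ℝ) → ℝ)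
    (hI : ∀ f : ℝ → ℝ → ℝ,
      I f = (1 / (1 - k)) * (∫ t in (1:ℝ)..N, (f (k * t) t + f t (k * t)) * t ^ (-p) / t)
        + f N N * N ^ (-p)) :
    I (fun _ _ => 1) = 1 ∧ I (fun x _ => x) = 1 ∧ I (fun _ y => y) = 1 := by
  have hp0 : 0 < p := by linarith
  have hN0 : 0 < N := by linarith
  have h1k : 1 - k = 2 / p := by rw [hk]; ring
  have hmoment : (k + 1) / (p - 1) = 2 / p := by
    rw [hk]
    field_simp [sub_ne_zero.mpr hp1.ne']
    ring
  have hbary : I (fun x _ => x) = 1 := by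
    rw [hI, integral_one_first_moment k hp1 hN0, hmoment, h1k]
    field_simp
    ring
  have hswap : I (fun _ y => y) = I (fun x _ => x) := by
    simp only [hI, add_comm (k * _)]
  refine ⟨?_, hbary, hswap.trans hbary⟩
  rw [hI, integral_one_mass hp0 hN0, h1k]
  field_simp
  ring

/-- The measure `μ_N` defined by
`∫ f dμ_N = (1/(1-k)) ∫₁^N [f(kt,t)+f(t,kt)] t^{-p} dt/t + f(N,N) N^{-p}`
(with `1 < p ≤ 2`, `k = 1 - 2/p`, `N > 1`) is a probability measure with barycenter
`(1,1)`: its total mass is 1 and both coordinates of its barycenter equal 1. -/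
theorem stmt18 (p k N : ℝ) (hp1 : 1 < p) (hp2 : p ≤ 2) (hk : k = 1 - 2 / p)
    (hN : 1 < N)
    (I : (ℝ → ℝ → ℝ) → ℝ)
    (hI : ∀ f : ℝ → ℝ → ℝ,
      I f = (1 / (1 - k)) * (∫ t in (1:ℝ)..N, (f (k * t) t + f t (k * t)) * t ^ (-p) / t)
        + f N N * N ^ (-p)) :
    I (fun _ _ => 1) = 1 ∧ I (fun x _ => x) = 1 ∧ I (fun _ y => y) = 1 :=
  stmt18_general p k N hp1 hk hN I hI
end
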